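/- For the harmonic-oscillator displacement operator D(α) = exp(α a† − α* a) and number state |n⟩, the diagonal matrix element is ⟨n| D(α) |n⟩ = e^{−|α|²/2} L_n(|α|²), where L_n is the n-th Laguerre polynomial. -/

import Mathlib

/-!
After reindexing `j = n - k`, the product `⟨n|e^{αa†}|j⟩⟨j|e^{-α*a}|n⟩` of the two
normally ordered factors is `C(n,k) (-|α|²)^k / k!`, which is the `k`-th
term of `L_n(|α|²)`.
-/

noncomputable section

/-- The `n`-th Laguerre polynomial `L_n(x) = Σ_{k=0}^n C(n,k) (−x)^k / k!`. -/
def laguerre (n : ℕ) (x : ℝ) : ℝ :=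
  ∑ k ∈ Finset.range (n + 1), (n.choose k : ℝ) * (-x) ^ k / (Nat.factorial k)

/-- Matrix element `⟨m| e^{α a†} |j⟩ = α^{m−j}/(m−j)! · √(m!/j!)` (zero unless
`j ≤ m`). -/
def expRaise (α : ℂ) (m j : ℕ) : ℂ :=
  if j ≤ m then α ^ (m - j) / (Nat.factorial (m - j)) *
    Real.sqrt ((Nat.factorial m : ℝ) / (Nat.factorial j)) else 0

/-- Matrix element `⟨j| e^{β a} |n⟩ = β^{n−j}/(n−j)! · √(n!/j!)` (zero unless
`j ≤ n`). -/
def expLower (β : ℂ) (j n : ℕ) : ℂ :=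
  if j ≤ n then β ^ (n - j) / (Nat.factorial (n - j)) *
    Real.sqrt ((Nat.factorial n : ℝ) / (Nat.factorial j)) else 0

/-- Matrix elements of the displacement operator `D(α) = e^{αa†−α*a}` via its
normally ordered form `D(α) = e^{−|α|²/2} e^{α a†} e^{−α* a}`. -/
def displacement (α : ℂ) (m n : ℕ) : ℂ :=
  Complex.exp (-((‖α‖ : ℂ) ^ 2) / 2) *
    ∑ j ∈ Finset.range (min m n + 1), expRaise α m j * expLower (-(starRingEnd ℂ) α) j n

open Nat

/- The two square roots multiply to `n!/j!`, which together with the two factorials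
`(n-j)!` forms the binomial coefficient. -/
theorem expRaise_mul_expLower {j n : ℕ} (hj : j ≤ n) (α β : ℂ) :
    expRaise α n j * expLower β j n = n.choose j * (α * β) ^ (n - j) / (n - j)! := by
  have hsqrt : (Real.sqrt ((n ! : ℝ) / j !) : ℂ) * Real.sqrt ((n ! : ℝ) / j !)
      = (n ! : ℂ) / j ! := by
    rw [← Complex.ofReal_mul, Real.mul_self_sqrt (by positivity)]
    push_cast
    rfl
  have hj! : (j ! : ℂ) ≠ 0 := Nat.cast_ne_zero.mpr j.factorial_ne_zero
  have hnj! : ((n - j)! : ℂ) ≠ 0 := Nat.cast_ne_zero.mpr (n - j).factorial_ne_zero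
  calc expRaise α n j * expLower β j n
      = (α * β) ^ (n - j) / ((n - j)! : ℂ) ^ 2 *
          ((Real.sqrt ((n ! : ℝ) / j !) : ℂ) * Real.sqrt ((n ! : ℝ) / j !)) := by
        simp only [expRaise, expLower, if_pos hj]
        ring
    _ = n.choose j * (α * β) ^ (n - j) / (n - j)! := by
        rw [hsqrt, Nat.cast_choose ℂ hj]
        field_simp

theorem mul_neg_conj (α : ℂ) : α * -(starRingEnd ℂ) α = -(‖α‖ : ℂ) ^ 2 := by
  rw [mul_neg, Complex.mul_conj, Complex.normSq_eq_norm_sq]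
  push_cast
  rfl

/-- the diagonal matrix element of the displacement operator in
the number basis is `⟨n|D(α)|n⟩ = e^{−|α|²/2} L_n(|α|²)`. -/
theorem stmt11 (α : ℂ) (n : ℕ) :
    displacement α n n
      = Complex.exp (-((‖α‖ : ℂ) ^ 2) / 2) *
        (laguerre n (‖α‖ ^ 2) : ℝ) := by
  rw [displacement, laguerre, min_self, ← Finset.sum_range_reflect]
  push_cast
  congr 1
  refine Finset.sum_congr rfl fun k hk => ?_
  replace hk : k ≤ n := Nat.lt_succ_iff.mp (Finset.mem_range.mp hk)
  rw [expRaise_mul_expLower (Nat.sub_le n k), mul_neg_conj,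
    Nat.choose_symm hk, Nat.sub_sub_self hk]

end
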